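/- For a context-free shuffle grammar, if u₀ ⇒ᴹ u₁ in the marked rightmost rewriting relation and the marker-erasures |u₀| and |u₁| differ, then |u₀| ⇒ |u₁| in the unrestricted rewriting relation. -/

import Mathlib

/-- `IsShuffle u v w` : `w` is an interleaving of `u` and `v`. -/
inductive IsShuffle {α : Type*} : List α → List α → List α → Prop
  | nil : IsShuffle [] [] []
  | left {a : α} {u v w : List α} : IsShuffle u v w → IsShuffle (a :: u) v (a :: w)
  | right {b : α} {u v w : List α} : IsShuffle u v w → IsShuffle u (b :: v) (b :: w)

/-- `NShuffle ls w` : `w` is a shuffling of the strings in `ls`. -/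
inductive NShuffle {α : Type*} : List (List α) → List α → Prop
  | nil : NShuffle [] []
  | cons {u : List α} {ls : List (List α)} {rest w : List α} :
      NShuffle ls rest → IsShuffle u rest w → NShuffle (u :: ls) w

/-- Entries of sentential forms of a context-free shuffle grammar:
symbols (nonterminal or terminal) or interim shuffle terms `⟨a⟩{u₀,…,uₙ}`. -/
inductive Entry (N T : Type*) where
  | nt : N → Entry N T
  | tm : T → Entry N T
  | shuf : N → List (List (Entry N T)) → Entry N T

/-- Sentential forms. -/
abbrev Form (N T : Type*) := List (Entry N T)

def symEntry {N T : Type*} : N ⊕ T → Entry N T := Sum.elim Entry.nt Entry.tm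

/-- A context-free shuffle grammar `(V, Σ, R, P, S)` with nonterminals `N`
and terminals `T`. -/
structure CFSG (N T : Type*) where
  R : N → List (N ⊕ T) → Prop
  P : N → List N → Prop
  start : N

/-- The rewriting relation `⇒` (rules R1–R5). -/
inductive CFSG.Rw {N T : Type*} (G : CFSG N T) : Form N T → Form N T → Prop
  | r1 {a : N} {u : List (N ⊕ T)} : G.R a u → G.Rw [.nt a] (u.map symEntry)
  | r2 {a : N} {as : List N} : G.P a as →
      G.Rw [.nt a] [.shuf a (as.map (fun s => [Entry.nt s]))]
  | r3 {a : N} {vs : List (List T)} {v : List T} : NShuffle vs v →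
      G.Rw [.shuf a (vs.map (List.map Entry.tm))] (v.map Entry.tm)
  | r4 {u u' u₀ u₁ : Form N T} : G.Rw u u' → G.Rw (u₀ ++ u ++ u₁) (u₀ ++ u' ++ u₁)
  | r5 {a : N} {pre post : List (Form N T)} {u u' : Form N T} : G.Rw u u' →
      G.Rw [.shuf a (pre ++ u :: post)] [.shuf a (pre ++ u' :: post)]

/-- `u ⇒* u'`. -/
def CFSG.RwStar {N T : Type*} (G : CFSG N T) : Form N T → Form N T → Prop :=
  Relation.ReflTransGen G.Rw
/-- Entries of marked sentential forms: symbols, the position marker `•`,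
or shuffle terms. -/
inductive MEntry (N T : Type*) where
  | nt : N → MEntry N T
  | tm : T → MEntry N T
  | mark : MEntry N T
  | shuf : N → List (List (MEntry N T)) → MEntry N T

abbrev MForm (N T : Type*) := List (MEntry N T)

mutual
/-- Erasure of position markers from an entry. -/
def eraseE {N T : Type*} : MEntry N T → List (Entry N T)
  | .nt a => [.nt a]
  | .tm t => [.tm t]
  | .mark => []
  | .shuf a ls => [.shuf a (eraseLL ls)]

def eraseLL {N T : Type*} : List (List (MEntry N T)) → List (List (Entry N T))
  | [] => []
  | l :: ls => eraseL l :: eraseLL ls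

/-- Erasure `|u|` of all position markers from a marked form. -/
def eraseL {N T : Type*} : List (MEntry N T) → List (Entry N T)
  | [] => []
  | e :: l => eraseE e ++ eraseL l
end

mutual
/-- Embedding of an unmarked form as a marked form (with no markers). -/
def embedE {N T : Type*} : Entry N T → MEntry N T
  | .nt a => .nt a
  | .tm t => .tm t
  | .shuf a ls => .shuf a (embedLL ls)

def embedLL {N T : Type*} : List (List (Entry N T)) → List (List (MEntry N T))
  | [] => []
  | l :: ls => embedL l :: embedLL ls

def embedL {N T : Type*} : List (Entry N T) → List (MEntry N T)
  | [] => []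
  | e :: l => embedE e :: embedL l
end

/-- The marked rightmost rewriting relation `⇒ᴹ` (rules M1–M6). -/
inductive CFSG.MRw {N T : Type*} (G : CFSG N T) : MForm N T → MForm N T → Prop
  | m1 {a : N} {u : List (N ⊕ T)} : G.R a u →
      G.MRw [.nt a, .mark] (u.map (Sum.elim MEntry.nt MEntry.tm) ++ [.mark])
  | m2 {a : N} {as : List N} : G.P a as →
      G.MRw [.nt a, .mark] [.shuf a (as.map (fun s => [MEntry.nt s, .mark]))]
  | m3 {a : N} {vs : List (List T)} {v : List T} : NShuffle vs v →
      G.MRw [.shuf a (vs.map (fun vi => MEntry.mark :: vi.map MEntry.tm))]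
        (MEntry.mark :: v.map MEntry.tm)
  | m4 {u u' u₀ : MForm N T} {u₁ : List T} : G.MRw u u' →
      G.MRw (u₀ ++ u ++ u₁.map MEntry.tm) (u₀ ++ u' ++ u₁.map MEntry.tm)
  | m5 {a : N} {pre post : List (MForm N T)} {u u' : MForm N T} : G.MRw u u' →
      G.MRw [.shuf a (pre ++ u :: post)] [.shuf a (pre ++ u' :: post)]
  | m6 {s : T} : G.MRw [.tm s, .mark] [.mark, .tm s]

/-- `u ⇒ᴹ* u'`. -/
def CFSG.MRwStar {N T : Type*} (G : CFSG N T) : MForm N T → MForm N T → Prop :=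
  Relation.ReflTransGen G.MRw

/-! Rules M1–M5 erase to R1–R5, while M6 only moves the marker; the congruence rules M4 and M5
pass this dichotomy on from the inner step. -/

section Erasure

variable {N T : Type*}

attribute [local simp] eraseL eraseE

@[simp]
lemma eraseL_append (l₀ l₁ : MForm N T) : eraseL (l₀ ++ l₁) = eraseL l₀ ++ eraseL l₁ := by
  induction l₀ with
  | nil => simp
  | cons e l ih => simp [ih]

@[simp]
lemma eraseLL_eq_map (ls : List (MForm N T)) : eraseLL ls = ls.map eraseL := by
  induction ls with
  | nil => simp [eraseLL]
  | cons l ls ih => simp [eraseLL, ih]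

@[simp]
lemma eraseL_map_tm (v : List T) : eraseL (v.map (MEntry.tm (N := N))) = v.map Entry.tm := by
  induction v with
  | nil => simp
  | cons t v ih => simp [ih]

@[simp]
lemma eraseL_map_sumElim (u : List (N ⊕ T)) :
    eraseL (u.map (Sum.elim MEntry.nt MEntry.tm)) = u.map symEntry := by
  induction u with
  | nil => simp
  | cons s u ih => cases s <;> simp [ih, symEntry]

theorem CFSG.MRw.eraseL_eq_or_rw {G : CFSG N T} {u₀ u₁ : MForm N T} (h : G.MRw u₀ u₁) :
    eraseL u₀ = eraseL u₁ ∨ G.Rw (eraseL u₀) (eraseL u₁) := by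
  induction h with
  | m1 hr => exact .inr (by simpa using CFSG.Rw.r1 hr)
  | m2 hp => exact .inr (by simpa [Function.comp_def] using CFSG.Rw.r2 hp)
  | m3 hs => exact .inr (by simpa [Function.comp_def] using CFSG.Rw.r3 hs)
  | m4 _ ih =>
    rcases ih with he | hr
    · exact .inl (by simp [he])
    · exact .inr (by simpa using hr.r4)
  | m5 _ ih =>
    rcases ih with he | hr
    · exact .inl (by simp [he])
    · exact .inr (by simpa using hr.r5)
  | m6 => exact .inl (by simp)

end Erasure

/-- Lemma 1(2): if `u₀ ⇒ᴹ u₁` and erasures differ, then `|u₀| ⇒ |u₁|`. -/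
theorem marked_rightmost_sound {N T : Type*} (G : CFSG N T)
    (u₀ u₁ : MForm N T) (h : G.MRw u₀ u₁) (hne : eraseL u₀ ≠ eraseL u₁) :
    G.Rw (eraseL u₀) (eraseL u₁) :=
  h.eraseL_eq_or_rw.resolve_left hne
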